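/- In the setting of the previous construction (G' obtained from G by adding k·n² universal vertices V_a, capacity U = n² + n): if there are k closed balls in the shortest-path metric of G', of total radius k, together with an assignment of all vertices of V ∪ V_a to balls containing them such that each ball receives at most U vertices, then every ball has radius exactly 1, each ball's center lies in V, and the set of the k centers is a dominating set of G of size k. -/

import Mathlib

/-- The join of a graph `G` with a set `A` of new universal vertices. -/
def joinGraph {V : Type*} (A : Type*) (G : SimpleGraph V) : SimpleGraph (V ⊕ A) where
  Adj x y :=
    match x, y with
    | Sum.inl u, Sum.inl v => G.Adj u v
    | Sum.inl _, Sum.inr _ => True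
    | Sum.inr _, Sum.inl _ => True
    | Sum.inr _, Sum.inr _ => False
  symm := by
    constructor
    rintro (u | a) (v | b) h
    · exact h.symm
    · trivial
    · trivial
    · exact h.elim
  loopless := by
    constructor
    rintro (u | a) h
    · exact G.irrefl h
    · exact h.elim

/-!
The `k - 1` other balls hold at most `(k - 1)(n² + n) = k n² - n(n + 1 - k) ≤ k n² - 2` of the
`n + k n²` vertices, so every ball receives at least `n + 2` of them. A ball of radius `0` holds one
vertex, and a ball of radius `1` around a universal vertex holds at most `n + 1` (it misses the
other universal vertices). Hence every radius is positive, so equal to `1` as they sum to `k`, and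
every center lies in `V`. Each `v ∈ V` is then assigned to a ball of radius `1` around some
center, which is therefore `v` or a neighbour of `v` in `G`.
-/

open Finset

theorem Fintype.card_le_add_pred_mul_of_card_fiber_le {α ι : Type*} [Fintype α] [Fintype ι]
    [DecidableEq ι] (μ : α → ι) {U c : ℕ} (hU : ∀ i, #{a | μ a = i} ≤ U) (j : ι)
    (hj : #{a | μ a = j} ≤ c) : Fintype.card α ≤ c + (Fintype.card ι - 1) * U :=
  calc Fintype.card α = ∑ i, #{a | μ a = i} :=
        card_eq_sum_card_fiberwise fun a _ => mem_univ (μ a)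
    _ = #{a | μ a = j} + ∑ i ∈ univ.erase j, #{a | μ a = i} :=
        (add_sum_erase _ _ (mem_univ j)).symm
    _ ≤ c + ∑ _i ∈ univ.erase j, U := add_le_add hj (sum_le_sum fun i _ => hU i)
    _ = c + (Fintype.card ι - 1) * U := by simp [card_erase_of_mem, card_univ]

theorem Fintype.eq_one_of_one_le_of_sum_eq_card {ι : Type*} [Fintype ι] {ρ : ι → ℕ}
    (hpos : ∀ i, 1 ≤ ρ i) (hsum : ∑ i, ρ i = Fintype.card ι) (i : ι) : ρ i = 1 :=
  ((sum_eq_sum_iff_of_le fun i _ => hpos i).1 (by simpa using hsum.symm) i (mem_univ i)).symm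

theorem SimpleGraph.Connected.adj_or_eq_of_dist_le_one {V : Type*} {G : SimpleGraph V}
    (hG : G.Connected) {u v : V} (h : G.dist u v ≤ 1) : G.Adj u v ∨ u = v := by
  rw [← edist_le_one_iff_adj_or_eq, ← (hG u v).coe_dist_eq_edist]
  exact_mod_cast h

theorem SimpleGraph.Connected.card_filter_dist_le_zero {V : Type*} [Fintype V]
    {G : SimpleGraph V} (hG : G.Connected) (c : V) : #{v | G.dist c v ≤ 0} = 1 := by
  rw [card_eq_one]
  exact ⟨c, by ext v; simp [hG.dist_eq_zero_iff, eq_comm]⟩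

theorem add_one_add_pred_mul_lt {n k : ℕ} (hk : 2 ≤ k) (hkn : k ≤ n) :
    n + 1 + (k - 1) * (n ^ 2 + n) < n + k * n ^ 2 := by
  obtain ⟨k, rfl⟩ := Nat.exists_eq_add_of_le' (by omega : 1 ≤ k)
  rw [Nat.add_sub_cancel]
  nlinarith

namespace joinGraph

variable {V A : Type*} (G : SimpleGraph V)

theorem adj_inl_inr (u : V) (a : A) : (joinGraph A G).Adj (.inl u) (.inr a) := trivial

theorem connected [Nonempty V] [Nonempty A] : (joinGraph A G).Connected := by
  obtain ⟨u₀⟩ := ‹Nonempty V›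
  obtain ⟨a₀⟩ := ‹Nonempty A›
  have hreach : ∀ v, (joinGraph A G).Reachable (.inl u₀) v := by
    rintro (u | a)
    · exact (adj_inl_inr G u₀ a₀).reachable.trans (adj_inl_inr G u a₀).reachable.symm
    · exact (adj_inl_inr G u₀ a).reachable
  exact ⟨fun v w => (hreach v).symm.trans (hreach w)⟩

theorem card_filter_dist_inr_le_one [Fintype V] [Fintype A] [Nonempty V] (a : A) :
    #{v | (joinGraph A G).dist (Sum.inr a) v ≤ 1} ≤ Fintype.card V + 1 := by
  classical
  have : Nonempty A := ⟨a⟩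
  calc #{v | (joinGraph A G).dist (Sum.inr a) v ≤ 1}
      ≤ #(insert (Sum.inr a) (univ.map .inl)) := by
        refine card_le_card fun v hv => ?_
        rcases (connected G).adj_or_eq_of_dist_le_one (mem_filter.1 hv).2 with hadj | rfl
        · rcases v with u | b
          · exact mem_insert_of_mem (mem_map_of_mem _ (mem_univ u))
          · exact hadj.elim
        · exact mem_insert_self _ _
    _ ≤ Fintype.card V + 1 := by simp

end joinGraph

theorem stmt6_general {V : Type*} [Fintype V] (G : SimpleGraph V)
    (n k : ℕ) (hn : Fintype.card V = n) (hk : 2 ≤ k) (hkn : k ≤ n)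
    (x : Fin k → V ⊕ Fin (k * n ^ 2)) (hinj : Function.Injective x)
    (ρ : Fin k → ℕ) (hsum : ∑ i, ρ i = k)
    (μ : (V ⊕ Fin (k * n ^ 2)) → Fin k)
    (hμ : ∀ v, (joinGraph (Fin (k * n ^ 2)) G).dist (x (μ v)) v ≤ ρ (μ v))
    (hcap : ∀ i, (Finset.univ.filter (fun v : V ⊕ Fin (k * n ^ 2) => μ v = i)).card ≤ n ^ 2 + n) :
    (∀ i, ρ i = 1) ∧
    ∃ c : Fin k → V, (∀ i, x i = Sum.inl (c i)) ∧ Function.Injective c ∧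
      ∀ v : V, ∃ i, c i = v ∨ G.Adj (c i) v := by
  set H := joinGraph (Fin (k * n ^ 2)) G
  have : Nonempty V := Fintype.card_pos_iff.1 (by omega)
  have : NeZero (k * n ^ 2) := ⟨Nat.mul_ne_zero (by omega) (pow_ne_zero _ (by omega))⟩
  have hconn : H.Connected := joinGraph.connected G
  have hball : ∀ j, #{v | μ v = j} ≤ #{v | H.dist (x j) v ≤ ρ j} := fun j =>
    card_le_card fun v hv => by
      rw [mem_filter] at hv ⊢
      exact ⟨mem_univ v, hv.2 ▸ hμ v⟩
  have hlarge : ∀ j, n + 1 < #{v | μ v = j} := fun j => by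
    by_contra! hj
    have hcount := Fintype.card_le_add_pred_mul_of_card_fiber_le μ hcap j hj
    simp only [Fintype.card_sum, Fintype.card_fin, hn] at hcount
    exact (add_one_add_pred_mul_lt hk hkn).not_ge hcount
  have hone : ∀ j, ρ j = 1 := by
    refine Fintype.eq_one_of_one_le_of_sum_eq_card (fun j => ?_) (by simpa using hsum)
    by_contra! hj
    have hsingle := hball j
    rw [Nat.lt_one_iff.1 hj, hconn.card_filter_dist_le_zero] at hsingle
    have := hlarge j
    omega
  have hcenter : ∀ j, ∃ u, x j = .inl u := by
    intro j
    rcases hx : x j with u | a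
    · exact ⟨u, rfl⟩
    · have hsmall := hball j
      rw [hone j, hx] at hsmall
      have := hsmall.trans (joinGraph.card_filter_dist_inr_le_one G a)
      have := hlarge j
      omega
  choose c hc using hcenter
  refine ⟨hone, c, hc, fun i j h => hinj (by rw [hc, hc, h]), fun v => ⟨μ (.inl v), ?_⟩⟩
  have hd := hμ (.inl v)
  rw [hone, hc] at hd
  exact (hconn.adj_or_eq_of_dist_le_one hd).symm.imp (fun h => Sum.inl_injective h) id

/-- A solution of cost `k` to the capacitated sum-of-radii instance built from `G` (with
`k·n²` universal vertices and capacity `U = n² + n`) yields: every ball has radius exactly 1,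
every center lies in `V`, and the centers form a dominating set of `G` of size `k`. -/
theorem stmt6 {V : Type*} [Fintype V] [DecidableEq V] (G : SimpleGraph V)
    (n k : ℕ) (hn : Fintype.card V = n) (hk : 2 ≤ k) (hkn : k ≤ n)
    (x : Fin k → V ⊕ Fin (k * n ^ 2)) (hinj : Function.Injective x)
    (ρ : Fin k → ℕ) (hsum : ∑ i, ρ i = k)
    (μ : (V ⊕ Fin (k * n ^ 2)) → Fin k)
    (hμ : ∀ v, (joinGraph (Fin (k * n ^ 2)) G).dist (x (μ v)) v ≤ ρ (μ v))
    (hcap : ∀ i, (Finset.univ.filter (fun v : V ⊕ Fin (k * n ^ 2) => μ v = i)).card ≤ n ^ 2 + n) :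
    (∀ i, ρ i = 1) ∧
    ∃ c : Fin k → V, (∀ i, x i = Sum.inl (c i)) ∧ Function.Injective c ∧
      ∀ v : V, ∃ i, c i = v ∨ G.Adj (c i) v :=
  stmt6_general G n k hn hk hkn x hinj ρ hsum μ hμ hcap
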